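/- Let f : ℝ → ℝ be three times differentiable on (0,∞) with f'(u) ≠ 0 and f''(u) ≠ 0 for all u > 0, and set B(u) = (1/(2f''(u)))·((f'(u) + u f''(u))/(u f'(u)) − f'''(u)/f''(u)). Then there exist real numbers λ and μ with B(u) − 1/f'(u) = λ u and B(u) f'(u) + 1 = μ f(u) for all u > 0 if and only if f''(u) + f'(u)/u = 0 for all u > 0, i.e. if and only if the surface of revolution r(u,v) = (u sinh v, u cosh v, f(u)) is semi-isotropic minimal; equivalently, if and only if f(u) = c₁ ln u + c₂ for some constants c₁ ≠ 0, c₂ ∈ ℝ. -/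

import Mathlib

/-!
Substituting `B = λu + 1/f'` turns the second eigen-equation into `λ u f' + 2 = μ f`.
Differentiating once gives `u f'' = k f'` with `k = μ/λ - 1`, and differentiating that gives
`u f''' = (k - 1) f''`. Under these two relations `B = 1/(k f')`, so the first eigen-equation
says that `u f'` is constant, i.e. `(u f')' = u (f'' + f'/u) = 0`. Conversely, minimality is the
case `k = -1`: then `B = -1/f'`, and with `u f' = c` one takes `λ = -2/c`, `μ = 0`.
Finally `u f' = c` integrates to `f = c ln u + c₂`.
-/

/-- The auxiliary function
`B(u) = (1/(2f''(u)))·((f'(u) + u f''(u))/(u f'(u)) − f'''(u)/f''(u))`. -/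
noncomputable def Bfun (f : ℝ → ℝ) (u : ℝ) : ℝ :=
  (1 / (2 * deriv (deriv f) u)) *
    ((deriv f u + u * deriv (deriv f) u) / (u * deriv f u) -
      deriv (deriv (deriv f)) u / deriv (deriv f) u)

open Set

theorem HasDerivAt.unique_of_eqOn {𝕜 F : Type*} [NontriviallyNormedField 𝕜]
    [NormedAddCommGroup F] [NormedSpace 𝕜 F] {g h : 𝕜 → F} {s : Set 𝕜} {a b : F} {u : 𝕜}
    (hs : IsOpen s) (hgh : EqOn g h s) (hu : u ∈ s) (hg : HasDerivAt g a u)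
    (hh : HasDerivAt h b u) : a = b :=
  (hg.congr_of_eventuallyEq (Filter.eventuallyEq_of_mem (hs.mem_nhds hu) hgh.symm)).unique hh

section

variable {f : ℝ → ℝ}

theorem hasDerivAt_mul_deriv {u : ℝ} (hf' : DifferentiableAt ℝ (deriv f) u) :
    HasDerivAt (fun x => x * deriv f x) (deriv f u + u * deriv (deriv f) u) u := by
  simpa using (hasDerivAt_id' u).fun_mul hf'.hasDerivAt

theorem minimal_iff_exists_mul_deriv_eq
    (hf' : ∀ u ∈ Ioi (0 : ℝ), DifferentiableAt ℝ (deriv f) u) :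
    (∀ u ∈ Ioi (0 : ℝ), deriv (deriv f) u + deriv f u / u = 0) ↔
      ∃ c, ∀ u ∈ Ioi (0 : ℝ), u * deriv f u = c := by
  constructor
  · intro hmin
    refine isOpen_Ioi.exists_is_const_of_deriv_eq_zero isPreconnected_Ioi
      (fun u hu => (hasDerivAt_mul_deriv (hf' u hu)).differentiableAt.differentiableWithinAt)
      (fun u hu => ?_)
    have hu0 : u ≠ 0 := (mem_Ioi.1 hu).ne'
    have hm := hmin u hu
    field_simp at hm
    rw [(hasDerivAt_mul_deriv (hf' u hu)).deriv, Pi.zero_apply]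
    linear_combination hm
  · rintro ⟨c, hc⟩ u hu
    have hu0 : u ≠ 0 := (mem_Ioi.1 hu).ne'
    have h0 := HasDerivAt.unique_of_eqOn isOpen_Ioi hc hu (hasDerivAt_mul_deriv (hf' u hu))
      (hasDerivAt_const u c)
    field_simp
    linear_combination h0

theorem forall_mul_deriv_eq_iff_exists_eq_log
    (hf : ∀ u ∈ Ioi (0 : ℝ), DifferentiableAt ℝ f u) (c : ℝ) :
    (∀ u ∈ Ioi (0 : ℝ), u * deriv f u = c) ↔
      ∃ c₂, ∀ u ∈ Ioi (0 : ℝ), f u = c * Real.log u + c₂ := by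
  constructor
  · intro hc
    refine isOpen_Ioi.exists_eq_add_of_deriv_eq isPreconnected_Ioi
      (fun u hu => (hf u hu).differentiableWithinAt)
      (fun u hu => DifferentiableAt.differentiableWithinAt
        ((Real.differentiableAt_log (mem_Ioi.1 hu).ne').const_mul c))
      (fun u hu => ?_)
    have hu0 : u ≠ 0 := (mem_Ioi.1 hu).ne'
    rw [deriv_const_mul _ (Real.differentiableAt_log hu0), Real.deriv_log, ← hc u hu]
    field_simp
  · rintro ⟨c₂, hc₂⟩ u hu
    have hu0 : u ≠ 0 := (mem_Ioi.1 hu).ne'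
    have hlog : HasDerivAt f (c * u⁻¹) u :=
      (((Real.hasDerivAt_log hu0).const_mul c).add_const c₂).congr_of_eventuallyEq
        (Filter.eventuallyEq_of_mem (isOpen_Ioi.mem_nhds hu) hc₂)
    rw [hlog.deriv]
    field_simp

theorem minimal_iff_exists_eq_log
    (hf : ∀ u ∈ Ioi (0 : ℝ), DifferentiableAt ℝ f u)
    (hf' : ∀ u ∈ Ioi (0 : ℝ), DifferentiableAt ℝ (deriv f) u)
    (h1 : ∀ u ∈ Ioi (0 : ℝ), deriv f u ≠ 0) :
    (∀ u ∈ Ioi (0 : ℝ), deriv (deriv f) u + deriv f u / u = 0) ↔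
      ∃ c₁ c₂ : ℝ, c₁ ≠ 0 ∧ ∀ u ∈ Ioi (0 : ℝ), f u = c₁ * Real.log u + c₂ := by
  rw [minimal_iff_exists_mul_deriv_eq hf']
  constructor
  · rintro ⟨c, hc⟩
    obtain ⟨c₂, hc₂⟩ := (forall_mul_deriv_eq_iff_exists_eq_log hf c).1 hc
    refine ⟨c, c₂, ?_, hc₂⟩
    have h1m : (1 : ℝ) ∈ Ioi 0 := mem_Ioi.2 one_pos
    rw [← hc 1 h1m, one_mul]
    exact h1 1 h1m
  · rintro ⟨c₁, c₂, -, hc₂⟩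
    exact ⟨c₁, (forall_mul_deriv_eq_iff_exists_eq_log hf c₁).2 ⟨c₂, hc₂⟩⟩

theorem mul_deriv3_eq_of_mul_deriv2_eq
    (hf' : ∀ u ∈ Ioi (0 : ℝ), DifferentiableAt ℝ (deriv f) u)
    (hf'' : ∀ u ∈ Ioi (0 : ℝ), DifferentiableAt ℝ (deriv (deriv f)) u) {k : ℝ}
    (hk : ∀ u ∈ Ioi (0 : ℝ), u * deriv (deriv f) u = k * deriv f u) :
    ∀ u ∈ Ioi (0 : ℝ), u * deriv (deriv (deriv f)) u = (k - 1) * deriv (deriv f) u := by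
  intro u hu
  have h := HasDerivAt.unique_of_eqOn isOpen_Ioi hk hu (hasDerivAt_mul_deriv (hf'' u hu))
    ((hf' u hu).hasDerivAt.const_mul k)
  linear_combination h

theorem Bfun_eq_of_mul_deriv_eq {u k : ℝ} (hu : u ≠ 0) (h1 : deriv f u ≠ 0) (hk : k ≠ 0)
    (hk2 : u * deriv (deriv f) u = k * deriv f u)
    (hk3 : u * deriv (deriv (deriv f)) u = (k - 1) * deriv (deriv f) u) :
    Bfun f u = 1 / (k * deriv f u) := by
  have hf2 : deriv (deriv f) u = k * deriv f u / u := by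
    field_simp
    linear_combination hk2
  have hf3 : deriv (deriv (deriv f)) u = (k - 1) * deriv (deriv f) u / u := by
    field_simp
    linear_combination hk3
  rw [Bfun, hf3, hf2]
  field_simp
  ring

theorem minimal_of_eigen
    (hf : ∀ u ∈ Ioi (0 : ℝ), DifferentiableAt ℝ f u)
    (hf' : ∀ u ∈ Ioi (0 : ℝ), DifferentiableAt ℝ (deriv f) u)
    (hf'' : ∀ u ∈ Ioi (0 : ℝ), DifferentiableAt ℝ (deriv (deriv f)) u)
    (h1 : ∀ u ∈ Ioi (0 : ℝ), deriv f u ≠ 0)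
    (h2 : ∀ u ∈ Ioi (0 : ℝ), deriv (deriv f) u ≠ 0) {lam mu : ℝ}
    (hL : ∀ u ∈ Ioi (0 : ℝ), Bfun f u - 1 / deriv f u = lam * u)
    (hM : ∀ u ∈ Ioi (0 : ℝ), Bfun f u * deriv f u + 1 = mu * f u) :
    ∀ u ∈ Ioi (0 : ℝ), deriv (deriv f) u + deriv f u / u = 0 := by
  have h1m : (1 : ℝ) ∈ Ioi 0 := mem_Ioi.2 one_pos
  have hrel : ∀ u ∈ Ioi (0 : ℝ), lam * (u * deriv f u) + 2 = mu * f u := by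
    intro u hu
    have hB : Bfun f u = lam * u + 1 / deriv f u := by linear_combination hL u hu
    rw [← hM u hu, hB]
    field_simp [h1 u hu]
    ring
  have hrel' : ∀ u ∈ Ioi (0 : ℝ),
      lam * (deriv f u + u * deriv (deriv f) u) = mu * deriv f u := fun u hu =>
    HasDerivAt.unique_of_eqOn isOpen_Ioi hrel hu
      (((hasDerivAt_mul_deriv (hf' u hu)).const_mul lam).add_const 2)
      ((hf u hu).hasDerivAt.const_mul mu)
  have hlam : lam ≠ 0 := by
    rintro rfl
    have hmu : mu = 0 := by simpa [h1 1 h1m] using hrel' 1 h1m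
    simpa [hmu] using hrel 1 h1m
  have hk : ∀ u ∈ Ioi (0 : ℝ), u * deriv (deriv f) u = (mu / lam - 1) * deriv f u := by
    intro u hu
    field_simp
    linear_combination hrel' u hu
  generalize mu / lam - 1 = k at hk
  have hk0 : k ≠ 0 := by
    intro hk0
    apply h2 1 h1m
    simpa [hk0] using hk 1 h1m
  have h3 := mul_deriv3_eq_of_mul_deriv2_eq hf' hf'' hk
  refine (minimal_iff_exists_mul_deriv_eq hf').2 ⟨(1 - k) / (lam * k), fun u hu => ?_⟩
  have hL' := hL u hu
  rw [Bfun_eq_of_mul_deriv_eq (mem_Ioi.1 hu).ne' (h1 u hu) hk0 (hk u hu) (h3 u hu)] at hL'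
  field_simp [h1 u hu] at hL' ⊢
  linear_combination -hL'

theorem eigen_of_minimal
    (hf' : ∀ u ∈ Ioi (0 : ℝ), DifferentiableAt ℝ (deriv f) u)
    (hf'' : ∀ u ∈ Ioi (0 : ℝ), DifferentiableAt ℝ (deriv (deriv f)) u)
    (h1 : ∀ u ∈ Ioi (0 : ℝ), deriv f u ≠ 0)
    (hmin : ∀ u ∈ Ioi (0 : ℝ), deriv (deriv f) u + deriv f u / u = 0) :
    ∃ lam mu : ℝ,
      (∀ u ∈ Ioi (0 : ℝ), Bfun f u - 1 / deriv f u = lam * u) ∧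
      (∀ u ∈ Ioi (0 : ℝ), Bfun f u * deriv f u + 1 = mu * f u) := by
  obtain ⟨c, hc⟩ := (minimal_iff_exists_mul_deriv_eq hf').1 hmin
  have hk : ∀ u ∈ Ioi (0 : ℝ), u * deriv (deriv f) u = -1 * deriv f u := by
    intro u hu
    have hu0 : u ≠ 0 := (mem_Ioi.1 hu).ne'
    have hm := hmin u hu
    field_simp at hm
    linear_combination hm
  have h3 := mul_deriv3_eq_of_mul_deriv2_eq hf' hf'' hk
  have hB : ∀ u ∈ Ioi (0 : ℝ), Bfun f u = 1 / (-1 * deriv f u) := fun u hu =>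
    Bfun_eq_of_mul_deriv_eq (mem_Ioi.1 hu).ne' (h1 u hu) (by norm_num) (hk u hu) (h3 u hu)
  refine ⟨-2 / c, 0, fun u hu => ?_, fun u hu => ?_⟩
  · rw [hB u hu, ← hc u hu]
    field_simp [(mem_Ioi.1 hu).ne', h1 u hu]
    ring
  · rw [hB u hu]
    field_simp [h1 u hu]
    ring

end

/-- For `f` three times differentiable on `(0,∞)` with `f' ≠ 0`, `f'' ≠ 0`: the
coordinate functions of the surface of revolution are `Δ^{II}`-eigenfunctions (i.e.
there exist `λ, μ` with `B(u) − 1/f'(u) = λu` and `B(u) f'(u) + 1 = μ f(u)` on `(0,∞)`)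
iff `f''(u) + f'(u)/u = 0` on `(0,∞)` (the surface is semi-isotropic minimal), and this
holds iff `f(u) = c₁ ln u + c₂` for some `c₁ ≠ 0`, `c₂`. -/
theorem lapII_eigen_iff_minimal
    (f : ℝ → ℝ)
    (hf : ∀ u ∈ Set.Ioi (0 : ℝ), DifferentiableAt ℝ f u)
    (hf' : ∀ u ∈ Set.Ioi (0 : ℝ), DifferentiableAt ℝ (deriv f) u)
    (hf'' : ∀ u ∈ Set.Ioi (0 : ℝ), DifferentiableAt ℝ (deriv (deriv f)) u)
    (h1 : ∀ u ∈ Set.Ioi (0 : ℝ), deriv f u ≠ 0)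
    (h2 : ∀ u ∈ Set.Ioi (0 : ℝ), deriv (deriv f) u ≠ 0) :
    ((∃ lam mu : ℝ,
        (∀ u ∈ Set.Ioi (0 : ℝ), Bfun f u - 1 / deriv f u = lam * u) ∧
        (∀ u ∈ Set.Ioi (0 : ℝ), Bfun f u * deriv f u + 1 = mu * f u)) ↔
      (∀ u ∈ Set.Ioi (0 : ℝ), deriv (deriv f) u + deriv f u / u = 0)) ∧
    ((∀ u ∈ Set.Ioi (0 : ℝ), deriv (deriv f) u + deriv f u / u = 0) ↔
      (∃ c₁ c₂ : ℝ, c₁ ≠ 0 ∧ ∀ u ∈ Set.Ioi (0 : ℝ), f u = c₁ * Real.log u + c₂)) :=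
  ⟨⟨fun ⟨_, _, hL, hM⟩ => minimal_of_eigen hf hf' hf'' h1 h2 hL hM,
      eigen_of_minimal hf' hf'' h1⟩,
    minimal_iff_exists_eq_log hf hf' h1⟩
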